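/- Let G be a König-Egerváry graph. Then α(G) + σ(G) = μ(G) + ξ(G), where ξ(G) is the number of vertices belonging to all maximum stable sets of G and σ(G) is the number of vertices belonging to no maximum stable set of G. -/

import Mathlib

open scoped Classical

namespace KEG

variable {V : Type*}

/-- `S` is a stable (independent) set of vertices of `G`. -/
def IsStable (G : SimpleGraph V) (S : Finset V) : Prop :=
  ∀ ⦃x⦄, x ∈ S → ∀ ⦃y⦄, y ∈ S → ¬G.Adj x y

/-- The stability number `α(G)`: maximum cardinality of a stable set. -/
noncomputable def alphaNum (G : SimpleGraph V) : ℕ :=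
  sSup {n | ∃ S : Finset V, IsStable G S ∧ S.card = n}

/-- `S` is a maximum stable set of `G`. -/
def IsMaxStable (G : SimpleGraph V) (S : Finset V) : Prop :=
  IsStable G S ∧ S.card = alphaNum G

/-- `M` is a matching of `G`: a set of edges of `G`, pairwise non-incident. -/
def IsMatching (G : SimpleGraph V) (M : Finset (Sym2 V)) : Prop :=
  (∀ e ∈ M, e ∈ G.edgeSet) ∧
    ∀ e ∈ M, ∀ f ∈ M, e ≠ f → ∀ v : V, v ∈ e → v ∉ f

/-- The matching number `μ(G)`: maximum cardinality of a matching. -/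
noncomputable def muNum (G : SimpleGraph V) : ℕ :=
  sSup {n | ∃ M : Finset (Sym2 V), IsMatching G M ∧ M.card = n}

/-- A perfect matching: a matching covering every vertex. -/
def IsPerfectMatching (G : SimpleGraph V) (M : Finset (Sym2 V)) : Prop :=
  IsMatching G M ∧ ∀ v : V, ∃ e ∈ M, v ∈ e

/-- A maximal matching: a matching such that no edge of `G` can be added to it
while keeping pairwise non-incidence, i.e. every edge of `G` outside `M` is
incident to an edge of `M`. -/
def IsMaximalMatching (G : SimpleGraph V) (M : Finset (Sym2 V)) : Prop :=
  IsMatching G M ∧ ∀ e ∈ G.edgeSet, e ∉ M → ∃ f ∈ M, ∃ v : V, v ∈ e ∧ v ∈ f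

/-- `G` is a König-Egerváry graph: `α(G) + μ(G) = |V(G)|`. -/
def KonigEgervary (G : SimpleGraph V) [Fintype V] : Prop :=
  alphaNum G + muNum G = Fintype.card V

/-- `e` is an α-critical edge of `G`: `α(G - e) > α(G)`. -/
def IsAlphaCritical (G : SimpleGraph V) (e : Sym2 V) : Prop :=
  e ∈ G.edgeSet ∧ alphaNum G < alphaNum (G.deleteEdges {e})

/-- `e` is a μ-critical edge of `G`: `μ(G - e) < μ(G)`. -/
def IsMuCritical (G : SimpleGraph V) (e : Sym2 V) : Prop :=
  e ∈ G.edgeSet ∧ muNum (G.deleteEdges {e}) < muNum G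

/-- `core(G)`: the set of vertices belonging to every maximum stable set of `G`. -/
def core (G : SimpleGraph V) : Set V :=
  {v | ∀ S : Finset V, IsMaxStable G S → v ∈ S}

/-- `ξ(G) = |core(G)|`. -/
noncomputable def xi (G : SimpleGraph V) : ℕ := (core G).ncard

/-- `σ(G)`: the number of vertices belonging to no maximum stable set of `G`. -/
noncomputable def sigmaNum (G : SimpleGraph V) : ℕ :=
  {v : V | ∀ S : Finset V, IsMaxStable G S → v ∉ S}.ncard

/-- `η(G)`: the number of α-critical edges of `G`. -/
noncomputable def eta (G : SimpleGraph V) : ℕ :=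
  {e : Sym2 V | IsAlphaCritical G e}.ncard

/-- `N(A)`: the set of vertices adjacent to some vertex of `A`. -/
def nbhd (G : SimpleGraph V) (A : Set V) : Set V :=
  {v | ∃ a ∈ A, G.Adj a v}

/-- `N[A] = A ∪ N(A)`: the closed neighborhood of `A`. -/
def closedNbhd (G : SimpleGraph V) (A : Set V) : Set V :=
  A ∪ nbhd G A

/-!
Fix a maximum matching `M`. Since `α + μ = n`, for every maximum stable set `S` each edge of `M`
has exactly one end outside `S`, and every vertex outside `S` is matched. Hence unmatched vertices
lie in the core, vertices in no maximum stable set are matched, and on each edge of `M` one end is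
in the core exactly when the other end is in no maximum stable set. Summing over the edges of `M`
gives `ξ = σ + (n - 2μ)`.
-/

open Finset

section

variable {V : Type*} {G : SimpleGraph V}

theorem exists_isMaxStable [Fintype V] (G : SimpleGraph V) : ∃ S : Finset V, IsMaxStable G S := by
  have hbdd : BddAbove {n | ∃ S : Finset V, IsStable G S ∧ #S = n} :=
    ⟨Fintype.card V, fun _ ⟨S, _, hS⟩ => hS ▸ S.card_le_univ⟩
  have hne : {n | ∃ S : Finset V, IsStable G S ∧ #S = n}.Nonempty :=
    ⟨0, ∅, fun _ hx => absurd hx (notMem_empty _), card_empty⟩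
  exact Nat.sSup_mem hne hbdd

theorem exists_isMatching_card_eq_muNum [Fintype V] (G : SimpleGraph V) :
    ∃ M : Finset (Sym2 V), IsMatching G M ∧ #M = muNum G := by
  have hbdd : BddAbove {n | ∃ M : Finset (Sym2 V), IsMatching G M ∧ #M = n} :=
    ⟨Fintype.card (Sym2 V), fun _ ⟨M, _, hM⟩ => hM ▸ M.card_le_univ⟩
  have hne : {n | ∃ M : Finset (Sym2 V), IsMatching G M ∧ #M = n}.Nonempty :=
    ⟨0, ∅, ⟨fun _ he => absurd he (notMem_empty _), fun _ he => absurd he (notMem_empty _)⟩,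
      card_empty⟩
  exact Nat.sSup_mem hne hbdd

theorem card_inter_pair_eq {a b : V} (hab : a ≠ b) {K D : Finset V} (ha : a ∈ K ↔ b ∈ D)
    (hb : b ∈ K ↔ a ∈ D) : #(K ∩ {a, b}) = #(D ∩ {a, b}) := by
  by_cases haK : a ∈ K <;> by_cases hbK : b ∈ K <;>
    simp [inter_insert_of_mem, inter_insert_of_notMem, haK, hbK, ← ha, ← hb, hab]

theorem IsMatching.card_inter_biUnion {M : Finset (Sym2 V)} (hM : IsMatching G M)
    (A : Finset V) : #(A ∩ M.biUnion Sym2.toFinset) = ∑ e ∈ M, #(A ∩ e.toFinset) := by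
  rw [inter_biUnion, card_biUnion]
  intro e he f hf hef
  refine disjoint_left.2 fun v hve hvf => hM.2 e he f hf hef v ?_ ?_
  · exact Sym2.mem_toFinset.1 (mem_inter.1 hve).2
  · exact Sym2.mem_toFinset.1 (mem_inter.1 hvf).2

theorem IsMatching.card_biUnion_toFinset [Fintype V] {M : Finset (Sym2 V)}
    (hM : IsMatching G M) : #(M.biUnion Sym2.toFinset) = 2 * #M := by
  have hedge (e) (he : e ∈ M) : #(univ ∩ e.toFinset) = 2 := by
    rw [univ_inter, Sym2.card_toFinset_of_not_isDiag _ (G.not_isDiag_of_mem_edgeSet (hM.1 e he))]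
  rw [← univ_inter (M.biUnion _), hM.card_inter_biUnion, sum_congr rfl hedge, sum_const,
    smul_eq_mul, mul_comm]

theorem IsStable.compl_inter_toFinset_nonempty [Fintype V] {S : Finset V} (hS : IsStable G S)
    {e : Sym2 V} (he : e ∈ G.edgeSet) : (Sᶜ ∩ e.toFinset).Nonempty := by
  induction e using Sym2.ind with
  | h a b =>
    by_contra hempty
    simp only [Sym2.toFinset_mk_eq, not_nonempty_iff_eq_empty, ← disjoint_iff_inter_eq_empty,
      disjoint_insert_right, disjoint_singleton_right, mem_compl, not_not] at hempty
    exact hS hempty.1 hempty.2 he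

theorem IsMatching.sum_card_compl_inter_le [Fintype V] {M : Finset (Sym2 V)}
    (hM : IsMatching G M) (S : Finset V) : ∑ e ∈ M, #(Sᶜ ∩ e.toFinset) ≤ #Sᶜ := by
  rw [← hM.card_inter_biUnion]
  exact card_le_card inter_subset_left

theorem IsMatching.card_add_two_mul_card [Fintype V] {M : Finset (Sym2 V)}
    (hM : IsMatching G M) {K D : Finset V} (hKD : ∀ a b, s(a, b) ∈ M → (a ∈ K ↔ b ∈ D))
    (hD : D ⊆ M.biUnion Sym2.toFinset) (hK : (M.biUnion Sym2.toFinset)ᶜ ⊆ K) :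
    #K + 2 * #M = #D + Fintype.card V := by
  set C := M.biUnion Sym2.toFinset
  have hedge (e) (he : e ∈ M) : #(K ∩ e.toFinset) = #(D ∩ e.toFinset) := by
    induction e using Sym2.ind with
    | h a b =>
      rw [Sym2.toFinset_mk_eq]
      exact card_inter_pair_eq (hM.1 _ he).ne (hKD a b he) (hKD b a (Sym2.eq_swap ▸ he))
  have hmatched : #(K ∩ C) = #D := by
    rw [hM.card_inter_biUnion, sum_congr rfl hedge, ← hM.card_inter_biUnion, inter_eq_left.2 hD]
  have hunmatched : K \ C = Cᶜ := by
    rw [sdiff_eq_inter_compl, inter_eq_right.2 hK]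
  have hsplit := card_inter_add_card_sdiff K C
  rw [hmatched, hunmatched, card_compl, hM.card_biUnion_toFinset] at hsplit
  have := hM.card_biUnion_toFinset ▸ card_le_univ C
  omega

section KonigEgervary

variable [Fintype V] {M : Finset (Sym2 V)} {S : Finset V}

theorem KonigEgervary.card_compl_eq_card (hG : KonigEgervary G) (hMc : #M = muNum G)
    (hS : IsMaxStable G S) : #Sᶜ = #M := by
  have : alphaNum G + muNum G = Fintype.card V := hG
  rw [card_compl, hS.2, hMc]
  omega

theorem KonigEgervary.compl_subset_biUnion (hG : KonigEgervary G) (hM : IsMatching G M)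
    (hMc : #M = muNum G) (hS : IsMaxStable G S) : Sᶜ ⊆ M.biUnion Sym2.toFinset := by
  have hle : #Sᶜ ≤ #(Sᶜ ∩ M.biUnion Sym2.toFinset) := by
    rw [hG.card_compl_eq_card hMc hS, hM.card_inter_biUnion, card_eq_sum_ones]
    exact sum_le_sum fun e he => one_le_card.2 (hS.1.compl_inter_toFinset_nonempty (hM.1 e he))
  rw [← inter_eq_left, eq_of_subset_of_card_le inter_subset_left hle]

theorem KonigEgervary.mem_iff_notMem (hG : KonigEgervary G) (hM : IsMatching G M)
    (hMc : #M = muNum G) (hS : IsMaxStable G S) {a b : V} (hab : s(a, b) ∈ M) :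
    a ∈ S ↔ b ∉ S := by
  have hadj : G.Adj a b := hM.1 _ hab
  refine ⟨fun ha hb => hS.1 ha hb hadj, fun hb => by_contra fun ha => ?_⟩
  have htwo : 1 < #(Sᶜ ∩ s(a, b).toFinset) := by
    rw [Sym2.toFinset_mk_eq, inter_eq_right.2 (by simp [insert_subset_iff, ha, hb]),
      card_pair hadj.ne]
    exact one_lt_two
  have hlt : ∑ e ∈ M, 1 < ∑ e ∈ M, #(Sᶜ ∩ e.toFinset) :=
    sum_lt_sum (fun e he => one_le_card.2 (hS.1.compl_inter_toFinset_nonempty (hM.1 e he)))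
      ⟨_, hab, htwo⟩
  have hle := hM.sum_card_compl_inter_le S
  rw [← card_eq_sum_ones, ← hG.card_compl_eq_card hMc hS] at hlt
  omega

end KonigEgervary

end

/-- In a König-Egerváry graph, `α(G) + σ(G) = μ(G) + ξ(G)`. -/
theorem stmt_10 {V : Type*} [Fintype V] (G : SimpleGraph V)
    (hG : KonigEgervary G) :
    alphaNum G + sigmaNum G = muNum G + xi G := by
  obtain ⟨M, hM, hMc⟩ := exists_isMatching_card_eq_muNum G
  obtain ⟨S₀, hS₀⟩ := exists_isMaxStable G
  have hcount := hM.card_add_two_mul_card (K := (core G).toFinset)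
    (D := {v | ∀ S : Finset V, IsMaxStable G S → v ∉ S}.toFinset) ?_ ?_ ?_
  · have : alphaNum G + muNum G = Fintype.card V := hG
    rw [xi, sigmaNum, Set.ncard_eq_toFinset_card', Set.ncard_eq_toFinset_card']
    omega
  · intro a b hab
    rw [Set.mem_toFinset, Set.mem_toFinset]
    exact forall₂_congr fun S hS => hG.mem_iff_notMem hM hMc hS hab
  · intro v hv
    rw [Set.mem_toFinset] at hv
    exact hG.compl_subset_biUnion hM hMc hS₀ (mem_compl.2 (hv S₀ hS₀))
  · intro v hv
    rw [Set.mem_toFinset]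
    exact fun S hS => by_contra fun hvS =>
      mem_compl.1 hv (hG.compl_subset_biUnion hM hMc hS (mem_compl.2 hvS))

end KEG
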